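/- For all atomic propositions p, q ∈ 𝒫 and every infinite word σ over 2^𝒫: V(σ, p R· q) = ( W(σ, p R q), W(σ, ◇□q ∨ ◇p), W(σ, □◇q ∨ ◇p), W(σ, ◇q ∨ ◇p) ). -/

import Mathlib

/-- Truth values as 4-tuples of Booleans. -/
abbrev TV := Bool × Bool × Bool × Bool

def ttop : TV := (true, true, true, true)
def tbot : TV := (false, false, false, false)

/-- Componentwise order on 4-tuples. -/
def tle (a b : TV) : Prop :=
  a.1 ≤ b.1 ∧ a.2.1 ≤ b.2.1 ∧ a.2.2.1 ≤ b.2.2.1 ∧ a.2.2.2 ≤ b.2.2.2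

instance : DecidableRel tle := fun a b =>
  decidable_of_iff (a.1 ≤ b.1 ∧ a.2.1 ≤ b.2.1 ∧ a.2.2.1 ≤ b.2.2.1 ∧ a.2.2.2 ≤ b.2.2.2) Iff.rfl

def tmeet (a b : TV) : TV :=
  (a.1 && b.1, a.2.1 && b.2.1, a.2.2.1 && b.2.2.1, a.2.2.2 && b.2.2.2)

def tjoin (a b : TV) : TV :=
  (a.1 || b.1, a.2.1 || b.2.1, a.2.2.1 || b.2.2.1, a.2.2.2 || b.2.2.2)

/-- da Costa negation. -/
def tneg (a : TV) : TV := if a = ttop then tbot else ttop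

/-- Residual implication. -/
def timp (a b : TV) : TV := if tle a b then ttop else b

/-- Infimum of a Boolean sequence. -/
noncomputable def bInf (f : ℕ → Bool) : Bool :=
  @decide (∀ i, f i = true) (Classical.propDecidable _)

/-- Supremum of a Boolean sequence. -/
noncomputable def bSup (f : ℕ → Bool) : Bool :=
  @decide (∃ i, f i = true) (Classical.propDecidable _)

/-- Bounded infimum over `i < n`. -/
noncomputable def bInfLt (n : ℕ) (f : ℕ → Bool) : Bool :=
  @decide (∀ i, i < n → f i = true) (Classical.propDecidable _)

/-- Bounded supremum over `i < n`. -/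
noncomputable def bSupLt (n : ℕ) (f : ℕ → Bool) : Bool :=
  @decide (∃ i, i < n ∧ f i = true) (Classical.propDecidable _)

/-- Suffix of an infinite word. -/
def suffix {P : Type} (σ : ℕ → Set P) (i : ℕ) : ℕ → Set P := fun j => σ (i + j)


/-- Full rLTL formulas. -/
inductive RFormula (P : Type) : Type where
  | atom : P → RFormula P
  | not : RFormula P → RFormula P
  | and : RFormula P → RFormula P → RFormula P
  | or : RFormula P → RFormula P → RFormula P
  | imp : RFormula P → RFormula P → RFormula P
  | next : RFormula P → RFormula P
  | always : RFormula P → RFormula P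
  | eventually : RFormula P → RFormula P
  | release : RFormula P → RFormula P → RFormula P
  | until : RFormula P → RFormula P → RFormula P
  deriving DecidableEq

open scoped Classical in
/-- The 5-valued semantics of full rLTL. -/
noncomputable def rV {P : Type} : RFormula P → (ℕ → Set P) → TV
  | .atom p, σ => if p ∈ σ 0 then ttop else tbot
  | .not φ, σ => tneg (rV φ σ)
  | .and φ ψ, σ => tmeet (rV φ σ) (rV ψ σ)
  | .or φ ψ, σ => tjoin (rV φ σ) (rV ψ σ)
  | .imp φ ψ, σ => timp (rV φ σ) (rV ψ σ)
  | .next φ, σ => rV φ (suffix σ 1)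
  | .always φ, σ =>
      (bInf fun i => (rV φ (suffix σ i)).1,
       bSup fun j => bInf fun i => (rV φ (suffix σ (j + i))).2.1,
       bInf fun j => bSup fun i => (rV φ (suffix σ (j + i))).2.2.1,
       bSup fun i => (rV φ (suffix σ i)).2.2.2)
  | .eventually φ, σ =>
      (bSup fun i => (rV φ (suffix σ i)).1,
       bSup fun i => (rV φ (suffix σ i)).2.1,
       bSup fun i => (rV φ (suffix σ i)).2.2.1,
       bSup fun i => (rV φ (suffix σ i)).2.2.2)
  | .release φ ψ, σ =>
      (bInf fun j => ((rV ψ (suffix σ j)).1 || bSupLt j fun i => (rV φ (suffix σ i)).1),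
       bSup fun k => bInf fun j =>
         ((rV ψ (suffix σ (k + j))).2.1 || bSupLt (k + j) fun i => (rV φ (suffix σ i)).2.1),
       bInf fun k => bSup fun j =>
         ((rV ψ (suffix σ (k + j))).2.2.1 || bSupLt (k + j) fun i => (rV φ (suffix σ i)).2.2.1),
       bSup fun j => ((rV ψ (suffix σ j)).2.2.2 || bSupLt j fun i => (rV φ (suffix σ i)).2.2.2))
  | .until φ ψ, σ =>
      (bSup fun j => ((rV ψ (suffix σ j)).1 && bInfLt j fun i => (rV φ (suffix σ i)).1),
       bSup fun j => ((rV ψ (suffix σ j)).2.1 && bInfLt j fun i => (rV φ (suffix σ i)).2.1),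
       bSup fun j => ((rV ψ (suffix σ j)).2.2.1 && bInfLt j fun i => (rV φ (suffix σ i)).2.2.1),
       bSup fun j => ((rV ψ (suffix σ j)).2.2.2 && bInfLt j fun i => (rV φ (suffix σ i)).2.2.2))

/-- Projection onto the k-th component. -/
def comp : Fin 4 → TV → Bool
  | 0, a => a.1
  | 1, a => a.2.1
  | 2, a => a.2.2.1
  | 3, a => a.2.2.2

/-- LTL formulas with until and release. -/
inductive LFormula (P : Type) : Type where
  | atom : P → LFormula P
  | not : LFormula P → LFormula P
  | or : LFormula P → LFormula P → LFormula P
  | always : LFormula P → LFormula P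
  | eventually : LFormula P → LFormula P
  | until : LFormula P → LFormula P → LFormula P
  | release : LFormula P → LFormula P → LFormula P

open scoped Classical in
/-- The standard Boolean LTL semantics. -/
noncomputable def lW {P : Type} : LFormula P → (ℕ → Set P) → Bool
  | .atom p, σ => if p ∈ σ 0 then true else false
  | .not φ, σ => !(lW φ σ)
  | .or φ ψ, σ => lW φ σ || lW ψ σ
  | .always φ, σ => bInf fun i => lW φ (suffix σ i)
  | .eventually φ, σ => bSup fun i => lW φ (suffix σ i)
  | .until φ ψ, σ => bSup fun j => (lW ψ (suffix σ j) && bInfLt j fun i => lW φ (suffix σ i))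
  | .release φ ψ, σ => bInf fun j => (lW ψ (suffix σ j) || bSupLt j fun i => lW φ (suffix σ i))

/-! The past disjunct `∃ i < j, p ∈ σ i` of the release is monotone in `j`: false for every `j`
when `p` never holds, true from some point on otherwise. The last three components quantify over
`j` only up to a tail of the word, so there it can be pulled out as `◇p`; the first component is
literally `W(σ, p R q)`. -/

section PastDisjunct

variable (φ ψ : ℕ → Prop)

theorem exists_or_exists_lt_iff :
    (∃ j, ψ j ∨ ∃ i < j, φ i) ↔ (∃ j, ψ j) ∨ ∃ i, φ i := by
  constructor
  · rintro ⟨j, hψ | ⟨i, -, hφ⟩⟩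
    exacts [Or.inl ⟨j, hψ⟩, Or.inr ⟨i, hφ⟩]
  · rintro (⟨j, hψ⟩ | ⟨i, hφ⟩)
    exacts [⟨j, Or.inl hψ⟩, ⟨i + 1, Or.inr ⟨i, i.lt_succ_self, hφ⟩⟩]

theorem exists_forall_or_exists_lt_iff :
    (∃ k, ∀ j, ψ (k + j) ∨ ∃ i < k + j, φ i) ↔ (∃ k, ∀ j, ψ (k + j)) ∨ ∃ i, φ i := by
  constructor
  · rintro ⟨k, h⟩
    by_cases hφ : ∃ i, φ i
    · exact Or.inr hφ
    · exact Or.inl ⟨k, fun j => (h j).resolve_right fun ⟨i, _, hi⟩ => hφ ⟨i, hi⟩⟩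
  · rintro (⟨k, hψ⟩ | ⟨i, hφ⟩)
    · exact ⟨k, fun j => Or.inl (hψ j)⟩
    · exact ⟨i + 1, fun j => Or.inr ⟨i, by omega, hφ⟩⟩

theorem forall_exists_or_exists_lt_iff :
    (∀ k, ∃ j, ψ (k + j) ∨ ∃ i < k + j, φ i) ↔ (∀ k, ∃ j, ψ (k + j)) ∨ ∃ i, φ i := by
  constructor
  · intro h
    by_cases hφ : ∃ i, φ i
    · exact Or.inr hφ
    · refine Or.inl fun k => ?_
      obtain ⟨j, hj⟩ := h k
      exact ⟨j, hj.resolve_right fun ⟨i, _, hi⟩ => hφ ⟨i, hi⟩⟩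
  · rintro (hψ | ⟨i, hφ⟩) k
    · obtain ⟨j, hj⟩ := hψ k
      exact ⟨j, Or.inl hj⟩
    · exact ⟨i + 1, Or.inr ⟨i, by omega, hφ⟩⟩

end PastDisjunct

@[simp]
theorem bInf_eq_true (f : ℕ → Bool) : bInf f = true ↔ ∀ i, f i = true := by
  simp only [bInf, decide_eq_true_eq]

@[simp]
theorem bSup_eq_true (f : ℕ → Bool) : bSup f = true ↔ ∃ i, f i = true := by
  simp only [bSup, decide_eq_true_eq]

@[simp]
theorem bSupLt_eq_true (n : ℕ) (f : ℕ → Bool) : bSupLt n f = true ↔ ∃ i < n, f i = true := by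
  simp only [bSupLt, decide_eq_true_eq]

@[simp]
theorem ite_ttop_tbot (c : Prop) [Decidable c] :
    (if c then ttop else tbot) = (decide c, decide c, decide c, decide c) := by
  by_cases hc : c <;> simp [hc, ttop, tbot]

/-- For atomic propositions `p, q` and every infinite word `σ`:
`V(σ, p R q) = (W(σ, p R q), W(σ, ◇□q ∨ ◇p), W(σ, □◇q ∨ ◇p), W(σ, ◇q ∨ ◇p))`. -/
theorem robust_release_on_atoms {P : Type} (p q : P) (σ : ℕ → Set P) :
    rV (.release (.atom p) (.atom q)) σ =
      (lW (.release (.atom p) (.atom q)) σ,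
       lW (.or (.eventually (.always (.atom q))) (.eventually (.atom p))) σ,
       lW (.or (.always (.eventually (.atom q))) (.eventually (.atom p))) σ,
       lW (.or (.eventually (.atom q)) (.eventually (.atom p))) σ) := by
  simp only [rV, lW]
  -- also inside the classical `Decidable` instances, which otherwise block rewriting the atoms
  unfold suffix
  simp only [ite_ttop_tbot, Bool.if_false_right, Bool.and_true, add_zero]
  refine Prod.ext rfl (Prod.ext ?_ (Prod.ext ?_ ?_)) <;> rw [Bool.eq_iff_iff]
  · simpa using exists_forall_or_exists_lt_iff (fun i => p ∈ σ i) (fun j => q ∈ σ j)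
  · simpa using forall_exists_or_exists_lt_iff (fun i => p ∈ σ i) (fun j => q ∈ σ j)
  · simpa using exists_or_exists_lt_iff (fun i => p ∈ σ i) (fun j => q ∈ σ j)
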